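/- arXiv:1301.0070 — 5 statements merged into one kernel-verified Lean document; each statement's English description precedes it below -/
import Mathlib

section
/- Let q = 2^m with m ≥ 1 and let n be an odd positive integer, and let a ∈ F_q with a ≠ 0 and a ≠ 1. Then the polynomial f(x) = x·(Tr(x) + a·x) is a permutation polynomial of F_{q^n}, i.e. the map x ↦ x·(Tr(x) + a·x) is a bijection of F_{q^n}. -/
/-!
Write `T = fieldTr (2 ^ m) n` and `f x = x * (T x + a * x)`. Since `T x` and `a` lie in `F_q`,
`T` is `F_q`-linear and commutes with squaring, `T (f x) = (1 + a) * (T x) ^ 2`; as `a ≠ 1` and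
squaring is injective in characteristic 2, `f x = f y` forces `T x = T y`. For `d = x + y` one
then gets `f x + f y = d * (T y + a * d)`, so either `d = 0` or `d = T y / a ∈ F_q`. In the latter
case `T d = n * d = d` because `n` is odd, while `T d = T x + T y = 0`; hence `d = 0` anyway.
-/

/-- The trace map from `F_{q^n}` to `F_q`: `Tr(x) = ∑_{i=0}^{n-1} x^{q^i}`. -/
def fieldTr {K : Type*} [Field K] (q n : ℕ) (x : K) : K :=
  ∑ i ∈ Finset.range n, x ^ q ^ i

section FieldTrace

variable {K : Type*} [Field K]

lemma fieldTr_mul_left_of_pow_eq {q : ℕ} (n : ℕ) {c : K} (hc : c ^ q = c) (x : K) :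
    fieldTr q n (c * x) = c * fieldTr q n x := by
  have hci : ∀ i : ℕ, c ^ q ^ i = c := by
    intro i
    induction i with
    | zero => simp
    | succ i ih => rw [pow_succ, pow_mul, ih, hc]
  simp only [fieldTr, Finset.mul_sum, mul_pow, hci]

lemma fieldTr_of_pow_eq {q : ℕ} (n : ℕ) {c : K} (hc : c ^ q = c) : fieldTr q n c = n * c := by
  simpa [fieldTr, mul_comm] using fieldTr_mul_left_of_pow_eq n hc 1

variable {p : ℕ} [ExpChar K p] (m n : ℕ)

lemma fieldTr_add (x y : K) :
    fieldTr (p ^ m) n (x + y) = fieldTr (p ^ m) n x + fieldTr (p ^ m) n y := by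
  simp only [fieldTr, ← Finset.sum_add_distrib, ← pow_mul, add_pow_expChar_pow]

lemma fieldTr_pow_char (x : K) : fieldTr (p ^ m) n (x ^ p) = fieldTr (p ^ m) n x ^ p := by
  simp only [fieldTr, sum_pow_char, ← pow_mul, mul_comm p]

lemma fieldTr_pow_eq_self (hK : ∀ x : K, x ^ (p ^ m) ^ n = x) (x : K) :
    fieldTr (p ^ m) n x ^ p ^ m = fieldTr (p ^ m) n x := by
  have hterm : ∀ i : ℕ, (x ^ (p ^ m) ^ i) ^ p ^ m = x ^ (p ^ m) ^ (i + 1) := fun i => by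
    rw [← pow_mul, pow_succ]
  simp only [fieldTr, sum_pow_char_pow, hterm]
  cases n with
  | zero => simp
  | succ k =>
    rw [Finset.sum_range_succ, hK, Finset.sum_range_succ' (fun i => x ^ (p ^ m) ^ i), pow_zero,
      pow_one]

end FieldTrace

section CharTwo

variable {K : Type*} [Field K] [CharP K 2] {m n : ℕ}

lemma fieldTr_mul_fieldTr_add_mul_self (hK : ∀ x : K, x ^ (2 ^ m) ^ n = x) {a : K}
    (haF : a ^ 2 ^ m = a) (x : K) :
    fieldTr (2 ^ m) n (x * (fieldTr (2 ^ m) n x + a * x)) =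
      (1 + a) * fieldTr (2 ^ m) n x ^ 2 := by
  rw [mul_add, mul_comm x, ← mul_assoc, mul_comm x a, mul_assoc, ← sq, fieldTr_add,
    fieldTr_mul_left_of_pow_eq n (fieldTr_pow_eq_self m n hK x),
    fieldTr_mul_left_of_pow_eq n haF, fieldTr_pow_char]
  ring

lemma fieldTr_of_pow_eq_of_odd (hn : Odd n) {c : K} (hc : c ^ 2 ^ m = c) :
    fieldTr (2 ^ m) n c = c := by
  rw [fieldTr_of_pow_eq n hc, natCast_eq_one_of_odd_of_two_eq_zero hn CharTwo.two_eq_zero,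
    one_mul]

lemma injective_mul_fieldTr_add_mul (hn : Odd n) (hK : ∀ x : K, x ^ (2 ^ m) ^ n = x) {a : K}
    (haF : a ^ 2 ^ m = a) (ha0 : a ≠ 0) (ha1 : a ≠ 1) :
    Function.Injective fun x : K => x * (fieldTr (2 ^ m) n x + a * x) := by
  intro x y hxy
  set T := fieldTr (2 ^ m) n (K := K)
  have hTxy : T x = T y := by
    have h1a : 1 + a ≠ 0 := fun h => ha1 (CharTwo.add_eq_zero.mp h).symm
    have hsq : (1 + a) * T x ^ 2 = (1 + a) * T y ^ 2 := by
      simp only [T, ← fieldTr_mul_fieldTr_add_mul_self hK haF]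
      exact congrArg _ hxy
    exact frobenius_inj K 2 (mul_left_cancel₀ h1a hsq)
  have hfactor : (x + y) * (T y + a * (x + y)) = 0 := by
    have : x * (T x + a * x) + y * (T y + a * y) = 0 := CharTwo.add_eq_zero.mpr hxy
    linear_combination this - x * hTxy + a * x * y * CharTwo.two_eq_zero (R := K)
  rw [← CharTwo.add_eq_zero]
  rcases mul_eq_zero.mp hfactor with hd | hd
  · exact hd
  · have hd_eq : x + y = T y * a⁻¹ := by
      rw [CharTwo.add_eq_zero.mp hd]
      field_simp
    have hdF : (x + y) ^ 2 ^ m = x + y := by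
      rw [hd_eq, mul_pow, fieldTr_pow_eq_self m n hK, inv_pow, haF]
    calc x + y = T (x + y) := (fieldTr_of_pow_eq_of_odd hn hdF).symm
      _ = 0 := by
        rw [show T (x + y) = T x + T y from fieldTr_add m n x y, hTxy, CharTwo.add_self_eq_zero]

end CharTwo

theorem bilinear_permutation_general (m n : ℕ) (hn : Odd n)
    (K : Type*) [Field K] [Fintype K] (hcard : Fintype.card K = 2 ^ (m * n))
    (a : K) (haF : a ^ 2 ^ m = a) (ha0 : a ≠ 0) (ha1 : a ≠ 1) :
    Function.Bijective (fun x : K => x * (fieldTr (2 ^ m) n x + a * x)) := by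
  have h2 : (2 : K) = 0 := by
    have h := FiniteField.cast_card_eq_zero K
    rw [hcard, Nat.cast_pow, Nat.cast_ofNat] at h
    exact eq_zero_of_pow_eq_zero h
  have : CharP K 2 := CharTwo.of_one_ne_zero_of_two_eq_zero one_ne_zero h2
  have hK : ∀ x : K, x ^ (2 ^ m) ^ n = x := fun x => by
    rw [← pow_mul, ← hcard, FiniteField.pow_card]
  exact Finite.injective_iff_bijective.mp (injective_mul_fieldTr_add_mul hn hK haF ha0 ha1)

/-- Theorem (Blokhuis et al.): for `q = 2^m`, `n` odd and `a ∈ F_q \ {0,1}`,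
the polynomial `f(x) = x·(Tr(x) + a·x)` is a permutation polynomial of `F_{q^n}`. -/
theorem bilinear_permutation (m n : ℕ) (hm : 1 ≤ m) (hn : Odd n)
    (K : Type*) [Field K] [Fintype K] (hcard : Fintype.card K = 2 ^ (m * n))
    (a : K) (haF : a ^ 2 ^ m = a) (ha0 : a ≠ 0) (ha1 : a ≠ 1) :
    Function.Bijective (fun x : K => x * (fieldTr (2 ^ m) n x + a * x)) :=
  bilinear_permutation_general m n hn K hcard a haF ha0 ha1
end

section
/- Let q = 2^m with m ≥ 1 and let n be an odd positive integer. Let L(x) = ∑_{i=0}^{N} b_i x^{2^i} be a linearized polynomial with all coefficients b_i ∈ F_q such that y ↦ y·L(y) is a bijection of F_q, let a ∈ F_q with a ≠ 0, and let g : F_q → F_q satisfy g(y·L(y)) = y for all y ∈ F_q (so g is the compositional inverse of y·L(y) on F_q). Define F(x) = x·(L(Tr(x)) + a·Tr(x) + a·x) and define G : F_{q^n} → F_{q^n} by G(x) = a^{2^{m-1}-1}·x^{2^{nm-1}} + ( g(Tr(x)) + a^{2^{m-1}-1}·∑_{k=1}^{(n-1)/2} x^{2^{(2k-1)m-1}}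 ) · ( Tr(x)/g(Tr(x)) + a·g(Tr(x)) )^{q-1} + ∑_{j=0}^{m-2} a^{2^j-1} · ( Tr(x)/g(Tr(x)) + a·g(Tr(x)) )^{2^m - 2^{j+1}} · ( ∑_{k=0}^{(n-1)/2} x^{q^{2k}} )^{2^j}, where division u/v means u·v^{-1} with the convention 0^{-1} = 0. Then G(F(x)) = x for all x ∈ F_{q^n}; that is, G is the compositional inverse of the permutation F of F_{q^n}. -/
/-- The linearized polynomial `L(x) = ∑_{i=0}^{N} b_i x^{2^i}`. -/
def linPoly {K : Type*} [Field K] (N : ℕ) (b : ℕ → K) (x : K) : K :=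
  ∑ i ∈ Finset.range (N + 1), b i * x ^ 2 ^ i

open Finset

lemma pow_pow_eq_self_of_pow_eq_self {M : Type*} [Monoid M] {q : ℕ} {u : M} (hu : u ^ q = u)
    (i : ℕ) : u ^ q ^ i = u := by
  induction i with
  | zero => rw [pow_zero, pow_one]
  | succ i ih => rw [pow_succ, pow_mul, ih, hu]

lemma pow_pred_eq_one_of_pow_eq_self {M₀ : Type*} [MonoidWithZero M₀]
    [IsRightCancelMulZero M₀] {k : ℕ} (hk : 1 ≤ k) {u : M₀} (hu0 : u ≠ 0) (hu : u ^ k = u) :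
    u ^ (k - 1) = 1 :=
  mul_right_cancel₀ hu0 <| by rw [← pow_succ, Nat.sub_add_cancel hk, hu, one_mul]

lemma sq_pow_two_pow_pred {M : Type*} [Monoid M] {k : ℕ} (hk : 1 ≤ k) (z : M) :
    (z ^ 2 ^ (k - 1)) ^ 2 = z ^ 2 ^ k := by
  rw [← pow_mul, ← pow_succ, Nat.sub_add_cancel hk]

lemma sum_range_two_mul_add_one_eq_even_add_odd {M : Type*} [AddCommMonoid M] (f : ℕ → M)
    (h : ℕ) :
    ∑ i ∈ range (2 * h + 1), f i
      = ∑ k ∈ range (h + 1), f (2 * k) + ∑ k ∈ range h, f (2 * k + 1) := by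
  induction h with
  | zero => simp
  | succ h ih =>
    rw [sum_range_succ (fun k => f (2 * k)), sum_range_succ (fun k => f (2 * k + 1)),
      show 2 * (h + 1) + 1 = 2 * h + 1 + 1 + 1 by ring, sum_range_succ, sum_range_succ, ih,
      show 2 * (h + 1) = 2 * h + 1 + 1 by ring]
    abel

lemma fieldTr_pow_eq_self_s2 {K : Type*} [Field K] {p : ℕ} [Fact p.Prime] [CharP K p] {k n : ℕ}
    {x : K} (hx : x ^ (p ^ k) ^ n = x) : fieldTr (p ^ k) n x ^ p ^ k = fieldTr (p ^ k) n x := by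
  have hshift := (sum_range_succ' (fun i => x ^ (p ^ k) ^ i) n).symm.trans
    (sum_range_succ (fun i => x ^ (p ^ k) ^ i) n)
  rw [pow_zero, pow_one, hx] at hshift
  calc fieldTr (p ^ k) n x ^ p ^ k = ∑ i ∈ range n, x ^ (p ^ k) ^ (i + 1) := by
        rw [fieldTr, sum_pow_char_pow]
        exact sum_congr rfl fun i _ => by rw [← pow_mul, ← pow_succ]
    _ = fieldTr (p ^ k) n x := add_right_cancel hshift

lemma linPoly_pow_eq_self {K : Type*} [Field K] {p : ℕ} [Fact p.Prime] [CharP K p] {k N : ℕ}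
    {b : ℕ → K} (hb : ∀ i ≤ N, b i ^ p ^ k = b i) {y : K} (hy : y ^ p ^ k = y) :
    linPoly N b y ^ p ^ k = linPoly N b y := by
  rw [linPoly, sum_pow_char_pow]
  refine sum_congr rfl fun i hi => ?_
  rw [mul_pow, hb i (Nat.lt_succ_iff.mp (mem_range.mp hi)), pow_right_comm, hy]

lemma sum_range_even_pow_pow_eq_add_sum_range_odd {R : Type*} [CommRing R] {p : ℕ}
    [Fact p.Prime] [CharP R p] {k h : ℕ} {x : R} (hx : x ^ (p ^ k) ^ (2 * h + 1) = x) :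
    (∑ i ∈ range (h + 1), x ^ (p ^ k) ^ (2 * i)) ^ p ^ k
      = x + ∑ i ∈ range h, x ^ (p ^ k) ^ (2 * i + 1) := by
  rw [sum_pow_char_pow, sum_range_succ, add_comm, ← pow_mul, ← pow_succ, hx]
  exact congrArg _ (sum_congr rfl fun i _ => by rw [← pow_mul, ← pow_succ])

section CharTwo

variable {R : Type*} [CommRing R] [CharP R 2]

lemma mul_add_mul_sq_pow_two_pow_pow {m : ℕ} {a c : R} (ha : a ^ 2 ^ m = a) (hc : c ^ 2 ^ m = c)
    (x : R) (i : ℕ) :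
    (c * x + a * x ^ 2) ^ (2 ^ m) ^ i = c * x ^ (2 ^ m) ^ i + a * (x ^ (2 ^ m) ^ i) ^ 2 := by
  have hexp : (2 ^ m) ^ i = 2 ^ (m * i) := (pow_mul 2 m i).symm
  rw [hexp, add_pow_char_pow, mul_pow, mul_pow, ← hexp, pow_right_comm x 2,
    pow_pow_eq_self_of_pow_eq_self ha, pow_pow_eq_self_of_pow_eq_self hc]

lemma sum_mul_add_mul_sq_pow_two_pow_pow {ι : Type*} {m : ℕ} {a c : R} (ha : a ^ 2 ^ m = a)
    (hc : c ^ 2 ^ m = c) (x : R) (s : Finset ι) (e : ι → ℕ) :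
    ∑ i ∈ s, (c * x + a * x ^ 2) ^ (2 ^ m) ^ e i
      = c * ∑ i ∈ s, x ^ (2 ^ m) ^ e i + a * (∑ i ∈ s, x ^ (2 ^ m) ^ e i) ^ 2 := by
  simp_rw [mul_add_mul_sq_pow_two_pow_pow ha hc]
  rw [sum_add_distrib, ← mul_sum, ← mul_sum, ← sum_pow_char]

lemma sum_range_mul_add_mul_sq_pow_two_pow (a c E : R) {m r : ℕ} (hr : r ≤ m) :
    ∑ j ∈ range r, a ^ (2 ^ j - 1) * c ^ (2 ^ m - 2 ^ (j + 1)) * (c * E + a * E ^ 2) ^ 2 ^ j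
      = c ^ (2 ^ m - 1) * E + a ^ (2 ^ r - 1) * c ^ (2 ^ m - 2 ^ r) * E ^ 2 ^ r := by
  induction r with
  | zero =>
    rw [sum_range_zero, pow_zero, pow_one, Nat.sub_self, pow_zero, one_mul,
      CharTwo.add_self_eq_zero]
  | succ r ih =>
    have hlt : 2 ^ (r + 1) ≤ 2 ^ m := Nat.pow_le_pow_right two_pos hr
    have hsucc : 2 ^ (r + 1) = 2 ^ r * 2 := pow_succ 2 r
    have hc_exp : 2 ^ m - 2 ^ r = (2 ^ m - 2 ^ (r + 1)) + 2 ^ r := by omega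
    have ha_exp : 2 ^ (r + 1) - 1 = (2 ^ r - 1) + 2 ^ r := by
      have := Nat.one_le_two_pow (n := r); omega
    rw [sum_range_succ, ih (by omega), add_pow_char_pow, mul_pow, mul_pow, ← pow_mul E,
      ← pow_succ', hc_exp, ha_exp, pow_add c, pow_add a]
    linear_combination (a ^ (2 ^ r - 1) * c ^ (2 ^ m - 2 ^ (r + 1)) * c ^ 2 ^ r * E ^ 2 ^ r)
      * CharTwo.two_eq_zero (R := R)

lemma sq_sum_Icc_pow_two_pow_pred {m : ℕ} (hm : 1 ≤ m) (y : R) (h : ℕ) :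
    (∑ k ∈ Icc 1 h, y ^ 2 ^ ((2 * k - 1) * m - 1)) ^ 2
      = ∑ k ∈ range h, y ^ (2 ^ m) ^ (2 * k + 1) := by
  rw [sum_pow_char, ← Ico_add_one_right_eq_Icc, sum_Ico_eq_sum_range, Nat.add_sub_cancel]
  refine sum_congr rfl fun k _ => ?_
  rw [sq_pow_two_pow_pred (Nat.mul_pos (by omega) hm),
    show (2 * (1 + k) - 1) * m = m * (2 * k + 1) by rw [mul_comm]; congr 1; omega, pow_mul]

end CharTwo

theorem inverse_formula_mul_add_mul_sq {K : Type*} [Field K] [CharP K 2] {m h : ℕ} (hm : 1 ≤ m)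
    {a c x y : K} (ha : a ^ 2 ^ m = a) (ha0 : a ≠ 0) (hc : c ^ 2 ^ m = c)
    (hx : x ^ (2 ^ m) ^ (2 * h + 1) = x) (hy : y = c * x + a * x ^ 2) :
    a ^ (2 ^ (m - 1) - 1) * y ^ 2 ^ ((2 * h + 1) * m - 1)
      + (fieldTr (2 ^ m) (2 * h + 1) x
          + a ^ (2 ^ (m - 1) - 1) * ∑ k ∈ Icc 1 h, y ^ 2 ^ ((2 * k - 1) * m - 1))
        * c ^ (2 ^ m - 1)
      + ∑ j ∈ range (m - 1),
          a ^ (2 ^ j - 1) * c ^ (2 ^ m - 2 ^ (j + 1))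
          * (∑ k ∈ range (h + 1), y ^ (2 ^ m) ^ (2 * k)) ^ 2 ^ j = x := by
  set A := a ^ (2 ^ (m - 1) - 1)
  set E := ∑ k ∈ range (h + 1), x ^ (2 ^ m) ^ (2 * k)
  set O := ∑ k ∈ range h, x ^ (2 ^ m) ^ (2 * k + 1)
  have hm2 : 2 ^ m = 2 ^ (m - 1) * 2 := by rw [← pow_succ, Nat.sub_add_cancel hm]
  have hm1 : 1 ≤ 2 ^ (m - 1) := Nat.one_le_two_pow
  have hsEO : fieldTr (2 ^ m) (2 * h + 1) x = E + O := sum_range_two_mul_add_one_eq_even_add_odd _ h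
  have hEq : E ^ 2 ^ m = x + O := sum_range_even_pow_pow_eq_add_sum_range_odd hx
  have hAa : A ^ 2 * a = 1 := by
    rw [← pow_mul, ← pow_succ, show (2 ^ (m - 1) - 1) * 2 + 1 = 2 ^ m - 1 by omega]
    exact pow_pred_eq_one_of_pow_eq_self (by omega) ha0 ha
  have hyq : y ^ (2 ^ m) ^ (2 * h + 1) = y := by
    rw [hy, mul_add_mul_sq_pow_two_pow_pow ha hc, hx]
  have hlead : (y ^ 2 ^ ((2 * h + 1) * m - 1)) ^ 2 = y := by
    rw [sq_pow_two_pow_pred (Nat.mul_pos (by omega) hm), mul_comm, pow_mul, hyq]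
  have hyO : y + ∑ k ∈ range h, y ^ (2 ^ m) ^ (2 * k + 1) = c * (x + O) + a * (x + O) ^ 2 := by
    rw [hy, sum_mul_add_mul_sq_pow_two_pow_pow ha hc]
    linear_combination (-(a * x * O)) * CharTwo.two_eq_zero (R := K)
  have hyE : ∑ k ∈ range (h + 1), y ^ (2 ^ m) ^ (2 * k) = c * E + a * E ^ 2 := by
    rw [hy, sum_mul_add_mul_sq_pow_two_pow_pow ha hc]
  rw [hyE, sum_range_mul_add_mul_sq_pow_two_pow a c E (Nat.sub_le m 1),
    show 2 ^ m - 2 ^ (m - 1) = 2 ^ (m - 1) by omega]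
  apply frobenius_inj K 2
  simp only [map_add, map_mul, frobenius_def]
  rw [hlead, sq_sum_Icc_pow_two_pow_pred hm, sq_pow_two_pow_pred hm, sq_pow_two_pow_pred hm, hc,
    hEq, hsEO]
  rcases eq_or_ne c 0 with rfl | hc0
  · rw [zero_pow (by omega), zero_pow two_ne_zero]
    linear_combination x ^ 2 * hAa + A ^ 2 * hy
  · rw [pow_pred_eq_one_of_pow_eq_self (by omega) hc0 hc]
    linear_combination A ^ 2 * hyO + (x + O) ^ 2 * hAa
      + (A ^ 2 * c * (x + O) + E ^ 2 + E * O + O * x + O ^ 2) * CharTwo.two_eq_zero (R := K)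

theorem compositional_inverse_generalized_bilinear_general (m n : ℕ) (hm : 1 ≤ m) (hn : Odd n)
    (K : Type*) [Field K] [Fintype K] (hcard : Fintype.card K = 2 ^ (m * n))
    (N : ℕ) (b : ℕ → K) (hb : ∀ i ≤ N, b i ^ 2 ^ m = b i)
    (a : K) (haF : a ^ 2 ^ m = a) (ha0 : a ≠ 0)
    (g : K → K)
    (hg : ∀ y : K, y ^ 2 ^ m = y → g (y * linPoly N b y) = y)
    (F G : K → K)
    (hF : ∀ x : K, F x =
      x * (linPoly N b (fieldTr (2 ^ m) n x) + a * fieldTr (2 ^ m) n x + a * x))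
    (hG : ∀ x : K, G x =
      a ^ (2 ^ (m - 1) - 1) * x ^ 2 ^ (n * m - 1)
      + (g (fieldTr (2 ^ m) n x)
          + a ^ (2 ^ (m - 1) - 1) *
            ∑ k ∈ Finset.Icc 1 ((n - 1) / 2), x ^ 2 ^ ((2 * k - 1) * m - 1))
        * (fieldTr (2 ^ m) n x / g (fieldTr (2 ^ m) n x)
            + a * g (fieldTr (2 ^ m) n x)) ^ (2 ^ m - 1)
      + ∑ j ∈ Finset.range (m - 1),
          a ^ (2 ^ j - 1)
          * (fieldTr (2 ^ m) n x / g (fieldTr (2 ^ m) n x)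
              + a * g (fieldTr (2 ^ m) n x)) ^ (2 ^ m - 2 ^ (j + 1))
          * (∑ k ∈ Finset.range ((n - 1) / 2 + 1), x ^ (2 ^ m) ^ (2 * k)) ^ 2 ^ j) :
    ∀ x : K, G (F x) = x := by
  have : CharP K 2 := charP_of_card_eq_prime_pow hcard
  obtain ⟨h, rfl⟩ := hn
  intro x
  have hx : x ^ (2 ^ m) ^ (2 * h + 1) = x := by
    rw [← pow_mul, ← hcard, FiniteField.pow_card]
  set s := fieldTr (2 ^ m) (2 * h + 1) x
  have hs : s ^ 2 ^ m = s := fieldTr_pow_eq_self_s2 hx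
  set c := linPoly N b s + a * s
  have hc : c ^ 2 ^ m = c := by
    rw [add_pow_char_pow, mul_pow, linPoly_pow_eq_self hb hs, haF, hs]
  have hFx : F x = c * x + a * x ^ 2 := by rw [hF]; ring
  have hTr : fieldTr (2 ^ m) (2 * h + 1) (F x) = s * linPoly N b s := by
    rw [hFx, show fieldTr (2 ^ m) (2 * h + 1) (c * x + a * x ^ 2) = c * s + a * s ^ 2 from
      sum_mul_add_mul_sq_pow_two_pow_pow haF hc x _ fun i => i]
    linear_combination (a * s ^ 2) * CharTwo.two_eq_zero (R := K)
  have hD : s * linPoly N b s / s + a * s = c := by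
    rw [mul_div_cancel_left_of_imp fun hs0 => by simp [hs0, linPoly]]
  rw [hG, hTr, hg s hs, hD, show (2 * h + 1 - 1) / 2 = h by omega]
  exact inverse_formula_mul_add_mul_sq hm haF ha0 hc hx hFx

/-- The compositional inverse of the bilinear permutation polynomial
`F(x) = x·(L(Tr(x)) + a·Tr(x) + a·x)` of `F_{q^n}`, `q = 2^m`, where `g` is the
compositional inverse of `y·L(y)` on `F_q`.  Division `u/v` in the field obeys the
Lean convention `0⁻¹ = 0`. -/
theorem compositional_inverse_generalized_bilinear (m n : ℕ) (hm : 1 ≤ m) (hn : Odd n)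
    (K : Type*) [Field K] [Fintype K] (hcard : Fintype.card K = 2 ^ (m * n))
    (N : ℕ) (b : ℕ → K) (hb : ∀ i ≤ N, b i ^ 2 ^ m = b i)
    (hLperm : Set.BijOn (fun y : K => y * linPoly N b y)
      {y : K | y ^ 2 ^ m = y} {y : K | y ^ 2 ^ m = y})
    (a : K) (haF : a ^ 2 ^ m = a) (ha0 : a ≠ 0)
    (g : K → K) (hgF : ∀ y : K, y ^ 2 ^ m = y → (g y) ^ 2 ^ m = g y)
    (hg : ∀ y : K, y ^ 2 ^ m = y → g (y * linPoly N b y) = y)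
    (F G : K → K)
    (hF : ∀ x : K, F x =
      x * (linPoly N b (fieldTr (2 ^ m) n x) + a * fieldTr (2 ^ m) n x + a * x))
    (hG : ∀ x : K, G x =
      a ^ (2 ^ (m - 1) - 1) * x ^ 2 ^ (n * m - 1)
      + (g (fieldTr (2 ^ m) n x)
          + a ^ (2 ^ (m - 1) - 1) *
            ∑ k ∈ Finset.Icc 1 ((n - 1) / 2), x ^ 2 ^ ((2 * k - 1) * m - 1))
        * (fieldTr (2 ^ m) n x / g (fieldTr (2 ^ m) n x)
            + a * g (fieldTr (2 ^ m) n x)) ^ (2 ^ m - 1)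
      + ∑ j ∈ Finset.range (m - 1),
          a ^ (2 ^ j - 1)
          * (fieldTr (2 ^ m) n x / g (fieldTr (2 ^ m) n x)
              + a * g (fieldTr (2 ^ m) n x)) ^ (2 ^ m - 2 ^ (j + 1))
          * (∑ k ∈ Finset.range ((n - 1) / 2 + 1), x ^ (2 ^ m) ^ (2 * k)) ^ 2 ^ j) :
    ∀ x : K, G (F x) = x :=
  compositional_inverse_generalized_bilinear_general m n hm hn K hcard N b hb a haF ha0 g hg F G hF
    hG
end

section
/- Let q = 2^m with m ≥ 1 and let n be an odd positive integer, and let a ∈ F_q with a ≠ 0 and a ≠ 1, so that f(x) = x·(Tr(x) + a·x) is a permutation polynomial of F_{q^n}. Define G : F_{q^n} → F_{q^n} by G(x) = a^{2^{m-1}-1}·x^{2^{nm-1}} + (1+a)^{2^{m-1}-1}·Tr(x)^{2^{m-1}} + a^{2^{m-1}-1}·Tr(x)^{2^{m-1}(2^m-1)}·∑_{k=1}^{(n-1)/2} x^{2^{(2k-1)m-1}} + ∑_{j=0}^{m-2} a^{2^j-1}·(1+a)^{2^{m-1}+2^j-1}·Tr(x)^{2^{m-1}-2^j}·( ∑_{k=0}^{(n-1)/2}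 x^{q^{2k}} )^{2^j}. Then G(f(x)) = x for all x ∈ F_{q^n}; that is, G is the compositional inverse of f. -/
open Finset

private lemma aux_tele {K : Type*} [CommRing K] (h2 : (2:K) = 0) (L : ℕ) (v : ℕ → K) :
    ∑ j ∈ Finset.range L, (v (j+1) + v (j+2)) = v 1 + v (L+1) := by
  induction L with
  | zero => simp; linear_combination (-(v 1)) * h2
  | succ L ih =>
    rw [Finset.sum_range_succ, ih, show L+1+1 = L+2 from by omega]
    linear_combination (v (L+1)) * h2

private lemma aux_split {M : Type*} [AddCommMonoid M] (g : ℕ → M) (h : ℕ) :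
    ∑ i ∈ Finset.range (2*h+1), g i
      = ∑ k ∈ Finset.range (h+1), g (2*k) + ∑ k ∈ Finset.Icc 1 h, g (2*k-1) := by
  induction h with
  | zero => simp
  | succ h ih =>
    rw [show 2*(h+1)+1 = (2*h+1)+1+1 from by omega, Finset.sum_range_succ, Finset.sum_range_succ, ih,
        Finset.sum_range_succ, Finset.sum_Icc_succ_top (by omega : 1 ≤ h+1),
        Finset.sum_range_succ]
    simp only [show 2*h+1+1-1 = 2*h+1 from by omega, show 2*(h+1) = 2*h+2 from by omega,
      show 2*h+1+1 = 2*h+2 from by omega, show 2*(h+1)-1 = 2*h+1 from by omega,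
      show 1+h = h+1 from by omega]
    rw [Finset.sum_range_succ]
    abel

private lemma aux_shift {M : Type*} [AddCommMonoid M] (g : ℕ → M) (h : ℕ) :
    ∑ k ∈ Finset.Icc 1 h, g (2*k-1) = ∑ i ∈ Finset.range h, g (2*i+1) := by
  rw [← Finset.Ico_add_one_right_eq_Icc, Finset.sum_Ico_eq_sum_range]
  simp only [show h+1-1 = h from by omega]
  exact Finset.sum_congr rfl fun i _ => by congr 1; omega

/-- The compositional inverse of the bilinear permutation polynomial
`f(x) = x·(Tr(x) + a·x)` of `F_{q^n}`, `q = 2^m`, `n` odd, `a ∈ F_q \ {0,1}`. -/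
theorem compositional_inverse_bilinear (m n : ℕ) (hm : 1 ≤ m) (hn : Odd n)
    (K : Type*) [Field K] [Fintype K] (hcard : Fintype.card K = 2 ^ (m * n))
    (a : K) (haF : a ^ 2 ^ m = a) (ha0 : a ≠ 0) (ha1 : a ≠ 1)
    (f G : K → K)
    (hf : ∀ x : K, f x = x * (fieldTr (2 ^ m) n x + a * x))
    (hG : ∀ x : K, G x =
      a ^ (2 ^ (m - 1) - 1) * x ^ 2 ^ (n * m - 1)
      + (1 + a) ^ (2 ^ (m - 1) - 1) * (fieldTr (2 ^ m) n x) ^ 2 ^ (m - 1)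
      + a ^ (2 ^ (m - 1) - 1)
        * (fieldTr (2 ^ m) n x) ^ (2 ^ (m - 1) * (2 ^ m - 1))
        * ∑ k ∈ Finset.Icc 1 ((n - 1) / 2), x ^ 2 ^ ((2 * k - 1) * m - 1)
      + ∑ j ∈ Finset.range (m - 1),
          a ^ (2 ^ j - 1) * (1 + a) ^ (2 ^ (m - 1) + 2 ^ j - 1)
          * (fieldTr (2 ^ m) n x) ^ (2 ^ (m - 1) - 2 ^ j)
          * (∑ k ∈ Finset.range ((n - 1) / 2 + 1), x ^ (2 ^ m) ^ (2 * k)) ^ 2 ^ j) :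
    ∀ x : K, G (f x) = x := by
  obtain ⟨h, rfl⟩ := hn
  -- characteristic 2
  have hchar : CharP K 2 := by
    obtain ⟨p, hc⟩ := CharP.exists K
    obtain ⟨np, hp, hcc⟩ := @FiniteField.card K _ _ p hc
    have hd : p ∣ 2 ^ (m*(2*h+1)) := by rw [← hcard, hcc]; exact dvd_pow_self p np.2.ne'
    have hp2 : p = 2 := (Nat.prime_dvd_prime_iff_eq hp Nat.prime_two).mp (hp.dvd_of_dvd_pow hd)
    rwa [hp2] at hc
  haveI := hchar
  haveI : Fact (Nat.Prime 2) := ⟨Nat.prime_two⟩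
  have h20 : (2:K) = 0 := by exact_mod_cast CharP.cast_eq_zero K 2
  -- m ≥ 2
  have hm2 : 2 ≤ m := by
    by_contra hlt
    have hm1 : m = 1 := by omega
    subst hm1
    have h2 : a^2 = a := by simpa using haF
    have hz : a * (a-1) = 0 := by linear_combination h2
    rcases mul_eq_zero.mp hz with hzz | hzz
    · exact ha0 hzz
    · exact ha1 (sub_eq_zero.mp hzz)
  -- ℕ pow facts
  have hrr : 1 ≤ (2:ℕ)^(m-1) := Nat.one_le_two_pow
  have hqq : (2:ℕ)^m = 2*2^(m-1) := by
    rw [← pow_succ', Nat.sub_add_cancel hm]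
  have hq2 : 2 ≤ (2:ℕ)^m := by omega
  -- frobenius-type facts
  have hQn : ∀ z : K, z ^ ((2:ℕ)^m)^(2*h+1) = z := by
    intro z
    rw [← pow_mul, ← hcard]
    exact FiniteField.pow_card z
  have haddE : ∀ (u v : K) (e : ℕ), (u+v)^(2^e:ℕ) = u^(2^e:ℕ)+v^(2^e:ℕ) :=
    fun u v e => add_pow_char_pow (p := 2) (n := e) u v
  have hsumE : ∀ (s : Finset ℕ) (g : ℕ → K) (e : ℕ),
      (∑ i ∈ s, g i)^((2:ℕ)^e) = ∑ i ∈ s, (g i)^((2:ℕ)^e) :=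
    fun s g e => sum_pow_char_pow (p := 2) (n := e) s g
  have hsum2 : ∀ (s : Finset ℕ) (g : ℕ → K), (∑ i ∈ s, g i)^2 = ∑ i ∈ s, (g i)^2 :=
    fun s g => by simpa using hsumE s g 1
  have hsq : ∀ u v : K, (u+v)^2 = u^2+v^2 := fun u v => by simpa using haddE u v 1
  have haddQ : ∀ (u v : K) (i : ℕ), (u+v)^((2:ℕ)^m)^i = u^((2:ℕ)^m)^i+v^((2:ℕ)^m)^i := by
    intro u v i
    have := haddE u v (m*i)
    rwa [pow_mul] at this
  have hfix : ∀ c : K, c^((2:ℕ)^m) = c → ∀ i, c^((2:ℕ)^m)^i = c := by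
    intro c hc i
    induction i with
    | zero => simpa using rfl
    | succ i ih => rw [pow_succ, pow_mul, ih, hc]
  have hinj : ∀ u v : K, u^2 = v^2 → u = v := fun u v hh =>
    frobenius_inj K 2 (by simpa [frobenius_def] using hh)
  have hunit : ∀ c : K, c ≠ 0 → c^((2:ℕ)^m) = c → c^((2:ℕ)^m-1) = 1 := by
    intro c hc hcq
    have h1 : c^((2:ℕ)^m-1) * c = 1 * c := by
      rw [one_mul, ← pow_succ, show (2:ℕ)^m-1+1 = 2^m from by omega]
      exact hcq
    exact mul_right_cancel₀ hc h1
  have ha1' : (1:K) + a ≠ 0 := by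
    intro hcontra
    apply ha1
    have h1 := eq_neg_of_add_eq_zero_right hcontra
    rw [h1, CharTwo.neg_eq]
  have h1aq : ((1:K)+a)^((2:ℕ)^m) = 1+a := by
    rw [haddE 1 a m, one_pow, haF]
  have hau : a^((2:ℕ)^m-1) = 1 := hunit a ha0 haF
  have h1au : ((1:K)+a)^((2:ℕ)^m-1) = 1 := hunit _ ha1' h1aq
  have hainv : a^((2:ℕ)^m-2)*a = 1 := by
    rw [← pow_succ, show (2:ℕ)^m-2+1 = 2^m-1 from by omega, hau]
  -- trace is fixed by q-Frobenius
  have hTq : ∀ z : K, (fieldTr (2^m) (2*h+1) z)^((2:ℕ)^m) = fieldTr (2^m) (2*h+1) z := by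
    intro z
    show (∑ i ∈ Finset.range (2*h+1), z ^ (2^m:ℕ) ^ i)^((2:ℕ)^m) = _
    rw [hsumE]
    have e1 : ∀ i : ℕ, (z^((2:ℕ)^m)^i)^((2:ℕ)^m) = z^((2:ℕ)^m)^(i+1) := fun i => by
      rw [← pow_mul, ← pow_succ]
    calc ∑ i ∈ Finset.range (2*h+1), (z^((2:ℕ)^m)^i)^((2:ℕ)^m)
        = ∑ i ∈ Finset.range (2*h+1), z^((2:ℕ)^m)^(i+1) :=
          Finset.sum_congr rfl fun i _ => e1 i
      _ = ∑ i ∈ Finset.range (2*h), z^((2:ℕ)^m)^(i+1) + z := by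
          rw [Finset.sum_range_succ, hQn z]
      _ = ∑ i ∈ Finset.range (2*h+1), z^((2:ℕ)^m)^i := by
          rw [Finset.sum_range_succ']
          simp
  intro x
  set t := fieldTr (2^m) (2*h+1) x with htdef
  have htq : t^((2:ℕ)^m) = t := hTq x
  have hyi : ∀ i : ℕ, (f x)^((2:ℕ)^m)^i = t * x^((2:ℕ)^m)^i + a * (x^((2:ℕ)^m)^i)^2 := by
    intro i
    have hfx : f x = t*x + a*x^2 := by rw [hf x, ← htdef]; ring
    calc (f x)^((2:ℕ)^m)^i = (t*x)^((2:ℕ)^m)^i + (a*x^2)^((2:ℕ)^m)^i := by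
          rw [hfx]; exact haddQ _ _ i
      _ = t^((2:ℕ)^m)^i * x^((2:ℕ)^m)^i + a^((2:ℕ)^m)^i * (x^2)^((2:ℕ)^m)^i := by
          rw [mul_pow, mul_pow]
      _ = t * x^((2:ℕ)^m)^i + a * (x^((2:ℕ)^m)^i)^2 := by
          rw [hfix t htq i, hfix a haF i, pow_right_comm x 2]
  have hs : fieldTr (2^m) (2*h+1) (f x) = (1+a)*t^2 := by
    show ∑ i ∈ Finset.range (2*h+1), (f x) ^ (2^m:ℕ) ^ i = _
    calc ∑ i ∈ Finset.range (2*h+1), (f x)^((2:ℕ)^m)^i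
        = ∑ i ∈ Finset.range (2*h+1), (t * x^((2:ℕ)^m)^i + a * (x^((2:ℕ)^m)^i)^2) :=
          Finset.sum_congr rfl fun i _ => hyi i
      _ = t * (∑ i ∈ Finset.range (2*h+1), x^((2:ℕ)^m)^i)
          + a * (∑ i ∈ Finset.range (2*h+1), x^((2:ℕ)^m)^i)^2 := by
          rw [Finset.sum_add_distrib, ← Finset.mul_sum, hsum2, ← Finset.mul_sum]
      _ = t * t + a * t^2 := rfl
      _ = (1+a)*t^2 := by ring
  set S := ∑ k ∈ Finset.range (h+1), x^((2:ℕ)^m)^(2*k) with hSdef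
  set O := ∑ k ∈ Finset.Icc 1 h, x^((2:ℕ)^m)^(2*k-1) with hOdef
  have hOS : S + O = t := by
    rw [hSdef, hOdef, htdef]
    exact (aux_split (fun i => x^((2:ℕ)^m)^i) h).symm
  have hSq : S^((2:ℕ)^m) = O + x := by
    rw [hSdef, hsumE _ _ m]
    have e1 : ∀ k:ℕ, (x^((2:ℕ)^m)^(2*k))^((2:ℕ)^m) = x^((2:ℕ)^m)^(2*k+1) := fun k => by
      rw [← pow_mul, ← pow_succ]
    calc ∑ k ∈ Finset.range (h+1), (x^((2:ℕ)^m)^(2*k))^((2:ℕ)^m)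
        = ∑ k ∈ Finset.range (h+1), x^((2:ℕ)^m)^(2*k+1) :=
          Finset.sum_congr rfl fun k _ => e1 k
      _ = (∑ k ∈ Finset.range h, x^((2:ℕ)^m)^(2*k+1)) + x^((2:ℕ)^m)^(2*h+1) :=
          Finset.sum_range_succ _ _
      _ = O + x := by
          rw [hQn x, hOdef, aux_shift (fun i => x^((2:ℕ)^m)^i) h]
  -- the main computation
  rw [hG (f x), show (2*h+1-1)/2 = h from by omega, hs]
  apply hinj
  rw [hsq, hsq, hsq]
  -- term A squared
  have hmulA : (2:ℕ)^((2*h+1)*m-1)*2 = ((2:ℕ)^m)^(2*h+1) := by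
    rw [← pow_succ, ← pow_mul]
    congr 1
    have h1 : 0 < (2*h+1)*m := Nat.mul_pos (by omega) (by omega)
    have h2 : (2*h+1)*m = m*(2*h+1) := Nat.mul_comm _ _
    omega
  have eA : (a ^ ((2:ℕ)^(m-1) - 1) * (f x) ^ (2:ℕ)^((2*h+1)*m - 1))^2
      = a^((2:ℕ)^m-2)*(t*x) + x^2 := by
    calc (a ^ ((2:ℕ)^(m-1) - 1) * (f x) ^ (2:ℕ)^((2*h+1)*m - 1))^2
        = a^(((2:ℕ)^(m-1)-1)*2) * ((f x)^((2:ℕ)^((2*h+1)*m-1)*2)) := by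
          rw [mul_pow, ← pow_mul, ← pow_mul]
      _ = a^((2:ℕ)^m-2) * ((f x)^(((2:ℕ)^m)^(2*h+1))) := by
          rw [show ((2:ℕ)^(m-1)-1)*2 = 2^m-2 from by omega, hmulA]
      _ = a^((2:ℕ)^m-2) * (t*x + a*x^2) := by rw [hyi (2*h+1), hQn x]
      _ = a^((2:ℕ)^m-2)*(t*x) + x^2 := by linear_combination (x^2) * hainv
  -- term B squared
  have eB : ((1+a) ^ ((2:ℕ)^(m-1) - 1) * ((1+a)*t^2) ^ (2:ℕ)^(m-1))^2 = t^2 := by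
    calc ((1+a) ^ ((2:ℕ)^(m-1) - 1) * ((1+a)*t^2) ^ (2:ℕ)^(m-1))^2
        = (1+a)^(((2:ℕ)^(m-1)-1)*2) * (((1+a)*t^2)^((2:ℕ)^(m-1)*2)) := by
          rw [mul_pow, ← pow_mul, ← pow_mul]
      _ = (1+a)^((2:ℕ)^m-2) * ((1+a)^((2:ℕ)^m) * (t^((2:ℕ)^m))^2) := by
          rw [show ((2:ℕ)^(m-1)-1)*2 = 2^m-2 from by omega,
              show (2:ℕ)^(m-1)*2 = 2^m from by omega, mul_pow, pow_right_comm t 2]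
      _ = ((1+a)^((2:ℕ)^m-2) * (1+a)^((2:ℕ)^m)) * t^2 := by rw [htq]; ring
      _ = t^2 := by
          rw [← pow_add, show (2:ℕ)^m-2+2^m = (2^m-1)*2 from by omega, pow_mul, h1au,
              one_pow, one_mul]
  rw [eA, eB]
  by_cases ht0 : t = 0
  · -- trace-zero case
    rw [ht0, show ((1:K)+a)*(0:K)^2 = 0 from by ring,
        zero_pow (Nat.mul_ne_zero (by omega) (by omega))]
    have hDz : ∑ j ∈ Finset.range (m-1),
        a^((2:ℕ)^j-1) * (1+a)^((2:ℕ)^(m-1)+2^j-1) * (0:K)^((2:ℕ)^(m-1)-2^j)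
          * (∑ k ∈ Finset.range (h+1), (f x) ^ ((2:ℕ)^m)^(2*k))^((2:ℕ)^j) = 0 := by
      refine Finset.sum_eq_zero fun j hj => ?_
      have hjm : j < m-1 := Finset.mem_range.mp hj
      have hlt : (2:ℕ)^j < 2^(m-1) := Nat.pow_lt_pow_right (by norm_num) (by omega)
      rw [zero_pow (show (2:ℕ)^(m-1)-2^j ≠ 0 from by omega)]
      ring
    rw [hDz]
    ring
  · -- trace-nonzero case
    have htu : t^((2:ℕ)^m-1) = 1 := hunit t ht0 htq
    have hcfix : ((1+a)*t^2)^((2:ℕ)^m) = (1+a)*t^2 := by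
      rw [mul_pow, h1aq, pow_right_comm t 2, htq]
    have hcu : ((1+a)*t^2)^((2:ℕ)^m-1) = 1 :=
      hunit _ (mul_ne_zero ha1' (pow_ne_zero 2 ht0)) hcfix
    have hc1 : ((1+a)*t^2)^((2:ℕ)^(m-1)*(2^m-1)) = 1 := by
      rw [mul_comm ((2:ℕ)^(m-1)) ((2:ℕ)^m-1), pow_mul, hcu, one_pow]
    -- C term
    have hOF : (∑ k ∈ Finset.Icc 1 h, (f x) ^ (2:ℕ)^((2*k-1)*m-1))^2 = t*O + a*O^2 := by
      rw [hsum2]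
      calc ∑ k ∈ Finset.Icc 1 h, ((f x)^(2:ℕ)^((2*k-1)*m-1))^2
          = ∑ k ∈ Finset.Icc 1 h,
              (t * x^((2:ℕ)^m)^(2*k-1) + a * (x^((2:ℕ)^m)^(2*k-1))^2) := by
            refine Finset.sum_congr rfl fun k hk => ?_
            have hk1 : 1 ≤ k := (Finset.mem_Icc.mp hk).1
            have e1 : (2:ℕ)^((2*k-1)*m-1)*2 = ((2:ℕ)^m)^(2*k-1) := by
              rw [← pow_succ, ← pow_mul]
              congr 1
              have h1 : 0 < (2*k-1)*m := Nat.mul_pos (by omega) (by omega)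
              have h2 : (2*k-1)*m = m*(2*k-1) := Nat.mul_comm _ _
              omega
            rw [← pow_mul, e1, hyi (2*k-1)]
        _ = t * (∑ k ∈ Finset.Icc 1 h, x^((2:ℕ)^m)^(2*k-1))
            + a * (∑ k ∈ Finset.Icc 1 h, x^((2:ℕ)^m)^(2*k-1))^2 := by
            rw [Finset.sum_add_distrib, ← Finset.mul_sum, hsum2, ← Finset.mul_sum]
        _ = t*O + a*O^2 := by rw [← hOdef]
    have eC : (a ^ ((2:ℕ)^(m-1) - 1) * ((1+a)*t^2) ^ ((2:ℕ)^(m-1)*(2^m-1))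
        * ∑ k ∈ Finset.Icc 1 h, (f x) ^ (2:ℕ)^((2*k-1)*m-1))^2
        = a^((2:ℕ)^m-2)*(t*O) + O^2 := by
      rw [hc1, mul_one]
      calc (a ^ ((2:ℕ)^(m-1)-1) * ∑ k ∈ Finset.Icc 1 h, (f x) ^ (2:ℕ)^((2*k-1)*m-1))^2
          = a^(((2:ℕ)^(m-1)-1)*2)
            * (∑ k ∈ Finset.Icc 1 h, (f x) ^ (2:ℕ)^((2*k-1)*m-1))^2 := by
            rw [mul_pow, ← pow_mul]
        _ = a^((2:ℕ)^m-2) * (t*O + a*O^2) := by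
            rw [show ((2:ℕ)^(m-1)-1)*2 = 2^m-2 from by omega, hOF]
        _ = a^((2:ℕ)^m-2)*(t*O) + O^2 := by linear_combination (O^2) * hainv
    -- D term
    have hW : (∑ k ∈ Finset.range (h+1), (f x) ^ ((2:ℕ)^m)^(2*k)) = t*S + a*S^2 := by
      calc ∑ k ∈ Finset.range (h+1), (f x) ^ ((2:ℕ)^m)^(2*k)
          = ∑ k ∈ Finset.range (h+1),
              (t * x^((2:ℕ)^m)^(2*k) + a * (x^((2:ℕ)^m)^(2*k))^2) :=
            Finset.sum_congr rfl fun k _ => hyi (2*k)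
        _ = t * (∑ k ∈ Finset.range (h+1), x^((2:ℕ)^m)^(2*k))
            + a * (∑ k ∈ Finset.range (h+1), x^((2:ℕ)^m)^(2*k))^2 := by
            rw [Finset.sum_add_distrib, ← Finset.mul_sum, hsum2, ← Finset.mul_sum]
        _ = t*S + a*S^2 := by rw [← hSdef]
    have eDj : ∀ j ∈ Finset.range (m-1),
        (a^((2:ℕ)^j-1) * (1+a)^((2:ℕ)^(m-1)+2^j-1) * ((1+a)*t^2)^((2:ℕ)^(m-1)-2^j)
          * (∑ k ∈ Finset.range (h+1), (f x) ^ ((2:ℕ)^m)^(2*k))^((2:ℕ)^j))^2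
        = a^((2:ℕ)^(j+1)-2) * t^(2*2^m-2^(j+1)) * S^((2:ℕ)^(j+1))
          + a^((2:ℕ)^(j+2)-2) * t^(2*2^m-2^(j+2)) * S^((2:ℕ)^(j+2)) := by
      intro j hj
      have hjm : j < m-1 := Finset.mem_range.mp hj
      have hj1 : (2:ℕ)^(j+1) = 2*2^j := by rw [pow_succ]; ring
      have hj2 : (2:ℕ)^(j+2) = 2*2^(j+1) := by rw [pow_succ]; ring
      have hjr : (2:ℕ)^(j+1) ≤ 2^(m-1) := Nat.pow_le_pow_right (by norm_num) (by omega)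
      have h1j : 1 ≤ (2:ℕ)^j := Nat.one_le_two_pow
      have hWp : (∑ k ∈ Finset.range (h+1), (f x) ^ ((2:ℕ)^m)^(2*k))^((2:ℕ)^(j+1))
          = t^((2:ℕ)^(j+1))*S^((2:ℕ)^(j+1)) + a^((2:ℕ)^(j+1))*S^((2:ℕ)^(j+2)) := by
        rw [hW, haddE _ _ (j+1), mul_pow, mul_pow, ← pow_mul,
            show 2*(2:ℕ)^(j+1) = 2^(j+2) from by omega]
      calc (a^((2:ℕ)^j-1) * (1+a)^((2:ℕ)^(m-1)+2^j-1) * ((1+a)*t^2)^((2:ℕ)^(m-1)-2^j)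
          * (∑ k ∈ Finset.range (h+1), (f x) ^ ((2:ℕ)^m)^(2*k))^((2:ℕ)^j))^2
          = a^(((2:ℕ)^j-1)*2) * (1+a)^(((2:ℕ)^(m-1)+2^j-1)*2)
            * ((1+a)*t^2)^(((2:ℕ)^(m-1)-2^j)*2)
            * (∑ k ∈ Finset.range (h+1), (f x) ^ ((2:ℕ)^m)^(2*k))^((2:ℕ)^j*2) := by
            rw [mul_pow, mul_pow, mul_pow, ← pow_mul, ← pow_mul, ← pow_mul, ← pow_mul]
        _ = a^((2:ℕ)^(j+1)-2) * (1+a)^((2:ℕ)^m+2^(j+1)-2)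
            * ((1+a)^((2:ℕ)^m-2^(j+1)) * t^(2*2^m-2^(j+2)))
            * (t^((2:ℕ)^(j+1))*S^((2:ℕ)^(j+1)) + a^((2:ℕ)^(j+1))*S^((2:ℕ)^(j+2))) := by
            rw [show ((2:ℕ)^j-1)*2 = 2^(j+1)-2 from by omega,
                show ((2:ℕ)^(m-1)+2^j-1)*2 = 2^m+2^(j+1)-2 from by omega,
                show ((2:ℕ)^(m-1)-2^j)*2 = 2^m-2^(j+1) from by omega,
                show ((2:ℕ)^j)*2 = 2^(j+1) from by omega,
                mul_pow, ← pow_mul t 2, show 2*((2:ℕ)^m-2^(j+1)) = 2*2^m-2^(j+2) from by omega,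
                hWp]
        _ = ((1+a)^((2:ℕ)^m+2^(j+1)-2) * (1+a)^((2:ℕ)^m-2^(j+1)))
              * (a^((2:ℕ)^(j+1)-2) * (t^(2*2^m-2^(j+2)) * t^((2:ℕ)^(j+1))) * S^((2:ℕ)^(j+1)))
            + ((1+a)^((2:ℕ)^m+2^(j+1)-2) * (1+a)^((2:ℕ)^m-2^(j+1)))
              * ((a^((2:ℕ)^(j+1)-2) * a^((2:ℕ)^(j+1))) * t^(2*2^m-2^(j+2)) * S^((2:ℕ)^(j+2))) := by
            ring
        _ = a^((2:ℕ)^(j+1)-2) * t^(2*2^m-2^(j+1)) * S^((2:ℕ)^(j+1))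
            + a^((2:ℕ)^(j+2)-2) * t^(2*2^m-2^(j+2)) * S^((2:ℕ)^(j+2)) := by
            rw [show ((1:K)+a)^((2:ℕ)^m+2^(j+1)-2) * (1+a)^((2:ℕ)^m-2^(j+1)) = 1 from by
                  rw [← pow_add, show ((2:ℕ)^m+2^(j+1)-2)+(2^m-2^(j+1)) = (2^m-1)*2 from by omega,
                      pow_mul, h1au, one_pow],
                show a^((2:ℕ)^(j+1)-2) * a^((2:ℕ)^(j+1)) = a^((2:ℕ)^(j+2)-2) from by
                  rw [← pow_add]; congr 1; omega,
                show t^(2*(2:ℕ)^m-2^(j+2)) * t^((2:ℕ)^(j+1)) = t^(2*(2:ℕ)^m-2^(j+1)) from by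
                  rw [← pow_add]; congr 1; omega]
            ring
    have eD : (∑ j ∈ Finset.range (m-1),
        a^((2:ℕ)^j-1) * (1+a)^((2:ℕ)^(m-1)+2^j-1) * ((1+a)*t^2)^((2:ℕ)^(m-1)-2^j)
          * (∑ k ∈ Finset.range (h+1), (f x) ^ ((2:ℕ)^m)^(2*k))^((2:ℕ)^j))^2
        = S^2 + a^((2:ℕ)^m-2)*(t*(O+x)) := by
      rw [hsum2]
      calc ∑ j ∈ Finset.range (m-1),
          (a^((2:ℕ)^j-1) * (1+a)^((2:ℕ)^(m-1)+2^j-1) * ((1+a)*t^2)^((2:ℕ)^(m-1)-2^j)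
            * (∑ k ∈ Finset.range (h+1), (f x) ^ ((2:ℕ)^m)^(2*k))^((2:ℕ)^j))^2
          = ∑ j ∈ Finset.range (m-1),
              (a^((2:ℕ)^(j+1)-2) * t^(2*2^m-2^(j+1)) * S^((2:ℕ)^(j+1))
                + a^((2:ℕ)^(j+2)-2) * t^(2*2^m-2^(j+2)) * S^((2:ℕ)^(j+2))) :=
            Finset.sum_congr rfl eDj
        _ = a^((2:ℕ)^1-2) * t^(2*2^m-2^1) * S^((2:ℕ)^1)
            + a^((2:ℕ)^((m-1)+1)-2) * t^(2*2^m-2^((m-1)+1)) * S^((2:ℕ)^((m-1)+1)) :=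
            aux_tele h20 (m-1) (fun i => a^((2:ℕ)^i-2) * t^(2*2^m-2^i) * S^((2:ℕ)^i))
        _ = S^2 + a^((2:ℕ)^m-2)*(t*(O+x)) := by
            rw [show (m-1)+1 = m from by omega, show (2:ℕ)^1-2 = 0 from by norm_num, pow_zero,
                show 2*(2:ℕ)^m-2^m = 2^m from by omega, htq, hSq,
                show 2*(2:ℕ)^m-2^1 = (2^m-1)*2 from by omega, pow_mul, htu, one_pow,
                show ((2:ℕ)^1) = 2 from by norm_num]
            ring
    rw [eC, eD, ← hOS]
    linear_combination (a^((2:ℕ)^m-2)*((S+O)*x) + a^((2:ℕ)^m-2)*((S+O)*O)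
      + S^2 + O^2 + S*O) * h20
end

section
/- Let d_1, d_2, …, d_h, n be positive integers with d_1 | d_2 | ⋯ | d_h | n, let c_1, …, c_h ∈ F_{2^n} with c_i lying in the subfield F_{2^{d_i}}, let 1 ≤ l < d_1, and let c_0 ∈ F_{2^n} lie in the subfield F_{2^{d_1}}. Set d_{h+1} = n, define L_1(x) = c_0·x^{2^l}, and for 2 ≤ i ≤ h+1 define L_i(x) = L_{i-1}(T_{d_i:d_{i-1}}(x)) + (∑_{j=1}^{i-1} c_j)·T_{d_i:d_{i-1}}(x) + (∑_{j=1}^{i-1} c_j)·x, where each L_i is viewed as a map on elements of the subfield F_{2^{d_i}} ⊆ F_{2^n}. Then for every x ∈ F_{2^n}, L_{h+1}(x) = (∑_{i=1}^{h} c_i)·x + ∑_{i=1}^{h} c_i·T_{n:d_i}(x) + c_0·T_{n:d_1}(x)^{2^l}. -/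
/-- The relative trace map from `F_{2^D}` to `F_{2^d}` (for `d ∣ D`):
`T_{D:d}(x) = ∑_{j=0}^{D/d - 1} x^{2^{dj}}`. -/
def relTr {K : Type*} [Field K] (D d : ℕ) (x : K) : K :=
  ∑ j ∈ Finset.range (D / d), x ^ 2 ^ (d * j)

section AuxLemmas

variable {K : Type*} [Field K]

lemma aux_charTwo {n : ℕ} [Fintype K] (hn : 0 < n) (hcard : Fintype.card K = 2 ^ n) :
    CharP K 2 := by
  have h2 : ringChar K = 2 := by
    rw [FiniteField.even_card_iff_char_two, hcard, Nat.pow_mod]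
    simp [Nat.zero_pow hn]
  exact ringChar.of_eq h2

lemma aux_sum_range_mul_decomp {M : Type*} [AddCommMonoid M] (a b : ℕ) (f : ℕ → M) :
    ∑ m ∈ Finset.range (a * b), f m
      = ∑ k ∈ Finset.range b, ∑ j ∈ Finset.range a, f (k * a + j) := by
  induction b with
  | zero => simp
  | succ b ih =>
      rw [Nat.mul_succ, Finset.sum_range_add, ih, Finset.sum_range_succ]
      congr 1
      apply Finset.sum_congr rfl
      intro j _
      congr 1
      ring

lemma relTr_self {d : ℕ} (hd : 0 < d) (x : K) : relTr d d x = x := by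
  unfold relTr
  rw [Nat.div_self hd]
  simp

variable [CharP K 2]

lemma relTr_trans {d e D : ℕ} (hd : 0 < d) (he : 0 < e) (hde : d ∣ e) (heD : e ∣ D)
    (x : K) : relTr e d (relTr D e x) = relTr D d x := by
  have hde' : d * (e / d) = e := Nat.mul_div_cancel' hde
  have hDd : D / d = (e / d) * (D / e) := by
    obtain ⟨a, rfl⟩ := hde
    obtain ⟨b, rfl⟩ := heD
    have h1 : d * a * b / d = a * b := by rw [mul_assoc, Nat.mul_div_cancel_left _ hd]
    have h2 : d * a / d = a := Nat.mul_div_cancel_left _ hd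
    have h3 : d * a * b / (d * a) = b := Nat.mul_div_cancel_left _ he
    rw [h1, h2, h3]
  calc relTr e d (relTr D e x)
      = ∑ j ∈ Finset.range (e / d), ∑ k ∈ Finset.range (D / e),
          x ^ 2 ^ (d * (k * (e / d) + j)) := by
        unfold relTr
        apply Finset.sum_congr rfl
        intro j _
        rw [sum_pow_char_pow]
        apply Finset.sum_congr rfl
        intro k _
        rw [← pow_mul, ← pow_add]
        congr 2
        calc e * k + d * j = (d * (e / d)) * k + d * j := by rw [hde']
          _ = d * (k * (e / d) + j) := by ring
    _ = ∑ k ∈ Finset.range (D / e), ∑ j ∈ Finset.range (e / d),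
          x ^ 2 ^ (d * (k * (e / d) + j)) := Finset.sum_comm
    _ = relTr D d x := by
        unfold relTr
        rw [hDd, aux_sum_range_mul_decomp]

lemma relTr_mem {d D : ℕ} (hdD : d ∣ D) (x : K) (hx : x ^ 2 ^ D = x) :
    (relTr D d x) ^ 2 ^ d = relTr D d x := by
  unfold relTr
  rw [sum_pow_char_pow]
  have key : ∀ j : ℕ, (x ^ 2 ^ (d * j)) ^ 2 ^ d = x ^ 2 ^ (d * (j + 1)) := by
    intro j
    rw [← pow_mul, ← pow_add, Nat.mul_succ]
  simp_rw [key]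
  have h0 : x ^ 2 ^ (d * (D / d)) = x ^ 2 ^ (d * 0) := by
    rw [Nat.mul_div_cancel' hdD, hx, mul_zero, pow_zero, pow_one]
  calc ∑ j ∈ Finset.range (D / d), x ^ 2 ^ (d * (j + 1))
      = ∑ j ∈ Finset.range (D / d + 1), x ^ 2 ^ (d * j) - x ^ 2 ^ (d * 0) := by
        rw [Finset.sum_range_succ']; ring
    _ = ∑ j ∈ Finset.range (D / d), x ^ 2 ^ (d * j) := by
        rw [Finset.sum_range_succ, h0]; ring

end AuxLemmas

/-- The recursively defined maps `L_1(x) = c_0·x^{2^l}`,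
`L_i(x) = L_{i-1}(T_{d_i:d_{i-1}}(x)) + (∑_{j<i} c_j)·T_{d_i:d_{i-1}}(x) + (∑_{j<i} c_j)·x`
(each `L_i` being a map on the subfield `F_{2^{d_i}}`, with `d_{h+1} = n`) coincide at the
top level with the closed form
`L_{h+1}(x) = (∑ c_i)·x + ∑ c_i·T_{n:d_i}(x) + c_0·T_{n:d_1}(x)^{2^l}`. -/
theorem tower_recursion_closed_form (h n : ℕ) (hh : 1 ≤ h) (d : ℕ → ℕ)
    (hdpos : ∀ i, 1 ≤ i → i ≤ h + 1 → 0 < d i)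
    (hdn : d (h + 1) = n)
    (hchain : ∀ i, 1 ≤ i → i ≤ h → d i ∣ d (i + 1))
    (K : Type*) [Field K] [Fintype K] (hcard : Fintype.card K = 2 ^ n)
    (c : ℕ → K) (hcF : ∀ i, 1 ≤ i → i ≤ h → c i ^ 2 ^ d i = c i)
    (l : ℕ) (hl1 : 1 ≤ l) (hl2 : l < d 1)
    (c0 : K) (hc0F : c0 ^ 2 ^ d 1 = c0)
    (L : ℕ → K → K)
    (hbase : ∀ x : K, x ^ 2 ^ d 1 = x → L 1 x = c0 * x ^ 2 ^ l)
    (hrec : ∀ i, 2 ≤ i → i ≤ h + 1 → ∀ x : K, x ^ 2 ^ d i = x →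
      L i x = L (i - 1) (relTr (d i) (d (i - 1)) x)
        + (∑ j ∈ Finset.Icc 1 (i - 1), c j) * relTr (d i) (d (i - 1)) x
        + (∑ j ∈ Finset.Icc 1 (i - 1), c j) * x) :
    ∀ x : K, L (h + 1) x =
      (∑ i ∈ Finset.Icc 1 h, c i) * x
      + (∑ i ∈ Finset.Icc 1 h, c i * relTr n (d i) x)
      + c0 * (relTr n (d 1) x) ^ 2 ^ l := by
  have hn : 0 < n := hdn ▸ hdpos (h + 1) (by omega) le_rfl
  haveI : CharP K 2 := aux_charTwo hn hcard
  -- chain divisibility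
  have hdvd : ∀ i j, 1 ≤ i → i ≤ j → j ≤ h + 1 → d i ∣ d j := by
    intro i j hi hij hj
    induction j with
    | zero => omega
    | succ j ih =>
        rcases Nat.lt_or_ge i (j + 1) with hlt | hge
        · exact (ih (by omega) (by omega)).trans (hchain j (by omega) (by omega))
        · have hij' : i = j + 1 := by omega
          subst hij'
          exact dvd_rfl
  have main : ∀ i, 1 ≤ i → i ≤ h + 1 → ∀ x : K, x ^ 2 ^ d i = x →
      L i x = (∑ j ∈ Finset.Icc 1 (i - 1), c j) * x
        + (∑ j ∈ Finset.Icc 1 (i - 1), c j * relTr (d i) (d j) x)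
        + c0 * (relTr (d i) (d 1) x) ^ 2 ^ l := by
    intro i hi
    induction i, hi using Nat.le_induction with
    | base =>
        intro _ x hx
        rw [hbase x hx, relTr_self (hdpos 1 le_rfl (by omega))]
        simp
    | succ i hi ih =>
        intro hi1 x hx
        have hih : i ≤ h := by omega
        set y := relTr (d (i + 1)) (d i) x with hy_def
        have hdi : d i ∣ d (i + 1) := hchain i hi hih
        have hy : y ^ 2 ^ d i = y := relTr_mem hdi x hx
        have hrec' := hrec (i + 1) (by omega) (by omega) x hx
        simp only [Nat.add_sub_cancel] at hrec' ⊢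
        rw [← hy_def] at hrec'
        rw [ih (by omega) y hy] at hrec'
        -- rewrite the traces of y as traces of x
        have htr : ∀ j, 1 ≤ j → j ≤ i → relTr (d i) (d j) y = relTr (d (i + 1)) (d j) x := by
          intro j hj hji
          exact relTr_trans (hdpos j hj (by omega)) (hdpos i hi (by omega))
            (hdvd j i hj hji (by omega)) hdi x
        have htr1 : relTr (d i) (d 1) y = relTr (d (i + 1)) (d 1) x := htr 1 le_rfl hi
        have htsum : (∑ j ∈ Finset.Icc 1 (i - 1), c j * relTr (d i) (d j) y)
            = ∑ j ∈ Finset.Icc 1 (i - 1), c j * relTr (d (i + 1)) (d j) x := by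
          apply Finset.sum_congr rfl
          intro j hj
          rw [Finset.mem_Icc] at hj
          rw [htr j hj.1 (by omega)]
        rw [htr1, htsum] at hrec'
        -- split the sums over Icc 1 i
        have hi' : i - 1 + 1 = i := by omega
        have hSsum : (∑ j ∈ Finset.Icc 1 i, c j)
            = (∑ j ∈ Finset.Icc 1 (i - 1), c j) + c i := by
          conv_lhs => rw [← hi']
          rw [Finset.sum_Icc_succ_top (by omega)]
          rw [hi']
        have hTsum : (∑ j ∈ Finset.Icc 1 i, c j * relTr (d (i + 1)) (d j) x)
            = (∑ j ∈ Finset.Icc 1 (i - 1), c j * relTr (d (i + 1)) (d j) x)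
              + c i * y := by
          conv_lhs => rw [← hi']
          rw [Finset.sum_Icc_succ_top (by omega)]
          rw [hi', hy_def]
        rw [hrec', hSsum, hTsum]
        have h2 : (2 : K) = 0 := CharTwo.two_eq_zero
        linear_combination ((∑ j ∈ Finset.Icc 1 (i - 1), c j) * y) * h2
  intro x
  have hx : x ^ 2 ^ d (h + 1) = x := by
    rw [hdn, ← hcard]
    exact FiniteField.pow_card x
  have := main (h + 1) (by omega) le_rfl x hx
  simpa [hdn, Nat.add_sub_cancel] using this
end

section
/- Let r be a positive integer. Then for every e ∈ F_{2^r}, Tr_{F_{2^r}/F_2}( 1/(e + e^{-1}) ) = 0, where Tr_{F_{2^r}/F_2}(x) = ∑_{i=0}^{r-1} x^{2^i} is the absolute trace map and inversion/division follow the convention 0^{-1} = 0 and 1/0 = 0. -/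
/-! In characteristic 2, `1 / (e + e⁻¹) = x + x ^ 2` with `x = e / (e + 1)`, and the absolute trace
of an Artin–Schreier element `x + x ^ 2` telescopes to `x + x ^ (2 ^ r) = x + x = 0`. -/

theorem one_div_add_inv_eq_add_sq {K : Type*} [Field K] [CharP K 2] (e : K) :
    1 / (e + e⁻¹) = e / (e + 1) + (e / (e + 1)) ^ 2 := by
  rcases eq_or_ne e 0 with rfl | he
  · simp
  rcases eq_or_ne (e + 1) 0 with h1 | h1
  · -- at `e = 1` both sides vanish only through the convention `1 / 0 = 0`
    have he1 : e = 1 := CharTwo.add_eq_zero.mp h1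
    simp [he1, CharTwo.add_self_eq_zero]
  · have hsq : e + e⁻¹ = (e + 1) ^ 2 / e := by
      rw [CharTwo.add_sq]
      field_simp
    rw [hsq]
    field_simp
    linear_combination -e * CharTwo.two_eq_zero (R := K)

theorem sum_range_add_sq_pow_two_pow {R : Type*} [CommRing R] [CharP R 2] (x : R) (n : ℕ) :
    ∑ i ∈ Finset.range n, (x + x ^ 2) ^ 2 ^ i = x + x ^ 2 ^ n := by
  induction n with
  | zero => simp [CharTwo.add_self_eq_zero]
  | succ n ih =>
    rw [Finset.sum_range_succ, ih, add_pow_char_pow, ← pow_mul, ← pow_succ', add_assoc,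
      CharTwo.add_cancel_left]

theorem trace_of_inverse_sum_zero_general (r : ℕ)
    (K : Type*) [Field K] [Fintype K] (hcard : Fintype.card K = 2 ^ r) :
    ∀ e : K, ∑ i ∈ Finset.range r, (1 / (e + e⁻¹)) ^ 2 ^ i = 0 := by
  have : CharP K 2 := charP_of_card_eq_prime_pow hcard
  intro e
  rw [one_div_add_inv_eq_add_sq, sum_range_add_sq_pow_two_pow, ← hcard, FiniteField.pow_card,
    CharTwo.add_self_eq_zero]

/-- For every `e` in the finite field `F_{2^r}`, the absolute trace of `1/(e + e⁻¹)`
vanishes (with the convention `0⁻¹ = 0` and `1/0 = 0`, as in Lean fields). -/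
theorem trace_of_inverse_sum_zero (r : ℕ) (hr : 1 ≤ r)
    (K : Type*) [Field K] [Fintype K] (hcard : Fintype.card K = 2 ^ r) :
    ∀ e : K, ∑ i ∈ Finset.range r, (1 / (e + e⁻¹)) ^ 2 ^ i = 0 :=
  trace_of_inverse_sum_zero_general r K hcard
end
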